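/- arXiv:1205.5138 — 4 statements merged into one kernel-verified Lean document; each statement's English description precedes it below -/
import Mathlib

section
/- For all real $\pi, \nu > 0$, all integers $n \geq 2$, $u \in \{2,\ldots,n\}$, $z \in \{0,\ldots,n-1\}$ and $k \in \{\max\{0, z-(u-1)\}, \ldots, \min\{z, n-u\}\}$, one has $\sum_{q=0}^{u} (-1)^q \binom{u}{q} \frac{B(\pi+z+q, \nu+n+u-1-z-q)}{B(\pi+k+q, \nu+n-k-q)} = 0$, where $B(x,y) = \Gamma(x)\Gamma(y)/\Gamma(x+y)$ is the Beta function. -/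
/-!
Write `a = z - k` and `b = u - 1 - a`, so that `a + b = u - 1`. With `x = π + k + q` and
`y = ν + n - k - q` the `q`-th ratio is `B(x + a, y + b) / B(x, y)`, and since `x + y = π + ν + n`
does not depend on `q`, the functional equation of `Γ` turns it into
`(x)_a (y)_b / (π + ν + n)_{u-1}`: a polynomial of degree `u - 1` in `q`. The alternating sum is the
`u`-th forward difference of this polynomial at `0`, hence zero.
-/

/-- The Euler Beta function `B(x,y) = Γ(x)Γ(y)/Γ(x+y)`. -/
noncomputable def Beta (x y : ℝ) : ℝ := Real.Gamma x * Real.Gamma y / Real.Gamma (x + y)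

open Finset Polynomial

theorem Real.Gamma_add_nat_eq_ascPochhammer_mul {x : ℝ} (hx : 0 < x) (m : ℕ) :
    Real.Gamma (x + m) = (ascPochhammer ℝ m).eval x * Real.Gamma x := by
  induction m with
  | zero => simp
  | succ m ih =>
    rw [Nat.cast_succ, ← add_assoc, Real.Gamma_add_one (by positivity), ih,
      ascPochhammer_succ_right]
    simp only [eval_mul, eval_add, eval_X, eval_natCast]
    ring

theorem Beta_add_nat_div_Beta {x y : ℝ} (hx : 0 < x) (hy : 0 < y) (a b : ℕ) :
    Beta (x + a) (y + b) / Beta x y =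
      (ascPochhammer ℝ a).eval x * (ascPochhammer ℝ b).eval y /
        (ascPochhammer ℝ (a + b)).eval (x + y) := by
  have hsum : x + a + (y + b) = x + y + ((a + b : ℕ) : ℝ) := by push_cast; ring
  have hΓx := (Real.Gamma_pos_of_pos hx).ne'
  have hΓy := (Real.Gamma_pos_of_pos hy).ne'
  have hΓxy := (Real.Gamma_pos_of_pos (add_pos hx hy)).ne'
  have hpoch : (ascPochhammer ℝ (a + b)).eval (x + y) ≠ 0 :=
    (ascPochhammer_pos _ _ (add_pos hx hy)).ne'
  simp only [Beta, hsum, Real.Gamma_add_nat_eq_ascPochhammer_mul hx,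
    Real.Gamma_add_nat_eq_ascPochhammer_mul hy,
    Real.Gamma_add_nat_eq_ascPochhammer_mul (add_pos hx hy)]
  field_simp

theorem neg_one_pow_mul_neg_one_pow_sub {R : Type*} [Monoid R] [HasDistribNeg R] {q n : ℕ}
    (h : q ≤ n) : (-1 : R) ^ n * (-1) ^ (n - q) = (-1) ^ q := by
  rw [← pow_add, show n + (n - q) = q + 2 * (n - q) by omega, pow_add, pow_mul, neg_one_sq,
    one_pow, mul_one]

theorem Polynomial.sum_range_neg_one_pow_mul_choose_mul_eval_eq_zero {R : Type*} [CommRing R]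
    {P : R[X]} {n : ℕ} (hP : P.natDegree < n) :
    ∑ q ∈ range (n + 1), (-1 : R) ^ q * n.choose q * P.eval (q : R) = 0 := by
  have hΔ := fwdDiff_iter_eq_sum_shift (1 : R) P.eval n 0
  rw [Polynomial.fwdDiff_iter_eq_zero_of_degree_lt hP] at hΔ
  calc ∑ q ∈ range (n + 1), (-1 : R) ^ q * n.choose q * P.eval (q : R)
      = (-1) ^ n * ∑ q ∈ range (n + 1), ((-1 : ℤ) ^ (n - q) * n.choose q) • P.eval (0 + q • 1) := by
        rw [mul_sum]
        refine sum_congr rfl fun q hq => ?_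
        rw [← neg_one_pow_mul_neg_one_pow_sub (Nat.le_of_lt_succ (mem_range.mp hq))]
        simp only [zsmul_eq_mul, nsmul_eq_mul, mul_one, zero_add]
        push_cast
        ring
    _ = 0 := by rw [← hΔ, Pi.zero_apply, mul_zero]

theorem Polynomial.sum_range_neg_one_pow_mul_choose_mul_eval_add_mul_eval_sub_eq_zero
    {R : Type*} [CommRing R] {P Q : R[X]} {n : ℕ} (hPQ : P.natDegree + Q.natDegree < n)
    (x y : R) :
    ∑ q ∈ range (n + 1), (-1 : R) ^ q * n.choose q * (P.eval (x + q) * Q.eval (y - q)) = 0 := by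
  have hdeg : (P.comp (X + C x) * Q.comp (C y - X)).natDegree < n := by
    have hX : (X + C x : R[X]).natDegree ≤ 1 := by compute_degree
    have hY : (C y - X : R[X]).natDegree ≤ 1 := by compute_degree
    calc _ ≤ (P.comp (X + C x)).natDegree + (Q.comp (C y - X)).natDegree := natDegree_mul_le
      _ ≤ P.natDegree * 1 + Q.natDegree * 1 := by
        gcongr
        · exact natDegree_comp_le.trans (Nat.mul_le_mul_left _ hX)
        · exact natDegree_comp_le.trans (Nat.mul_le_mul_left _ hY)
      _ < n := by simpa using hPQ
  simpa [add_comm x] using sum_range_neg_one_pow_mul_choose_mul_eval_eq_zero hdeg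

theorem beta_alternating_sum_general (π ν : ℝ) (hπ : 0 < π) (hν : 0 < ν)
    (n u z k : ℕ) (hu2 : 2 ≤ u) (hun : u ≤ n)
    (hk1 : z - (u - 1) ≤ k) (hk2 : k ≤ min z (n - u)) :
    ∑ q ∈ Finset.range (u + 1), (-1 : ℝ) ^ q * (u.choose q : ℝ) *
      (Beta (π + z + q) (ν + n + u - 1 - z - q) / Beta (π + k + q) (ν + n - k - q)) = 0 := by
  obtain ⟨hkz, hkn⟩ := le_min_iff.mp hk2
  set a := z - k
  set b := u - 1 - a
  have hz : (z : ℝ) = k + a := by simp [a, Nat.cast_sub hkz]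
  have hu : (u : ℝ) = a + b + 1 := by norm_cast; omega
  have hratio : ∀ q ∈ range (u + 1),
      Beta (π + z + q) (ν + n + u - 1 - z - q) / Beta (π + k + q) (ν + n - k - q) =
        (ascPochhammer ℝ a).eval (π + k + q) * (ascPochhammer ℝ b).eval (ν + n - k - q) /
          (ascPochhammer ℝ (a + b)).eval (π + ν + n) := by
    intro q hq
    have hkq : (k : ℝ) + q ≤ n := by
      exact_mod_cast (by have := mem_range.mp hq; omega : k + q ≤ n)
    rw [show π + z + q = π + k + q + a by rw [hz]; ring,
      show ν + n + u - 1 - z - q = ν + n - k - q + b by rw [hu, hz]; ring,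
      Beta_add_nat_div_Beta (by positivity) (by linarith)]
    ring_nf
  rw [sum_congr rfl fun q hq => by rw [hratio q hq, ← mul_div_assoc], ← sum_div,
    sum_range_neg_one_pow_mul_choose_mul_eval_add_mul_eval_sub_eq_zero, zero_div]
  rw [ascPochhammer_natDegree, ascPochhammer_natDegree]
  omega

theorem beta_alternating_sum (π ν : ℝ) (hπ : 0 < π) (hν : 0 < ν)
    (n u z k : ℕ) (hn : 2 ≤ n) (hu2 : 2 ≤ u) (hun : u ≤ n)
    (hz : z ≤ n - 1) (hk1 : z - (u - 1) ≤ k) (hk2 : k ≤ min z (n - u)) :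
    ∑ q ∈ Finset.range (u + 1), (-1 : ℝ) ^ q * (u.choose q : ℝ) *
      (Beta (π + z + q) (ν + n + u - 1 - z - q) / Beta (π + k + q) (ν + n - k - q)) = 0 :=
  beta_alternating_sum_general π ν hπ hν n u z k hu2 hun hk1 hk2
end

section
/- With $P_n$ denoting the $HLS_K$ finite-dimensional distribution on $D^n$, the family $(P_n)_{n \geq 1}$ is consistent: for every $n \geq 1$ and $\mathbf{x}_n \in D^n$, $\sum_{d \in D} P_{n+1}(\mathbf{x}_n, d) = P_n(\mathbf{x}_n)$. -/
/-- Number of coordinates of `x` equal to `j`. -/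
def cnt {n K : ℕ} (x : Fin n → Fin K) (j : Fin K) : ℕ :=
  (Finset.univ.filter fun h => x h = j).card

/-- The finite-dimensional distribution of an `HLS_K(π,ν,α₁,…,α_{K-2})` exchangeable
sequence on `D^n` with `D = {d₁,…,d_K}` encoded as `Fin K` (color `dᵢ ↔ i-1`):
`P(x) = (1-α)^{n-z} (∏_{i=1}^{K-2} αᵢ^{z_{i+1}}) B(z₁+π, n-z₁+ν)/B(π,ν)`,
where `zᵢ` is the number of coordinates of `x` equal to `dᵢ`, `z = z₁+⋯+z_{K-1}`
and `α = α₁+⋯+α_{K-2}`. -/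
noncomputable def hlsP (K : ℕ) (hK : 3 ≤ K) (n : ℕ) (π ν : ℝ) (a : ℕ → ℝ)
    (x : Fin n → Fin K) : ℝ :=
  (1 - ∑ i : Fin (K - 2), a ((i : ℕ) + 1)) ^
      (n - ∑ i : Fin (K - 1), cnt x ⟨(i : ℕ), by have := i.isLt; omega⟩) *
    (∏ i : Fin (K - 2), a ((i : ℕ) + 1) ^ cnt x ⟨(i : ℕ) + 1, by have := i.isLt; omega⟩) *
    Beta ((cnt x ⟨0, by omega⟩ : ℝ) + π) (((n - cnt x ⟨0, by omega⟩ : ℕ) : ℝ) + ν) / Beta π ν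

lemma cnt_snoc {n K : ℕ} (x : Fin n → Fin K) (d j : Fin K) :
    cnt (Fin.snoc x d) j = cnt x j + if d = j then 1 else 0 := by
  classical
  unfold cnt
  rw [Finset.card_filter, Finset.card_filter, Fin.sum_univ_castSucc]
  simp

lemma cnt_le {n K : ℕ} (x : Fin n → Fin K) (j : Fin K) : cnt x j ≤ n := by
  simpa [cnt] using Finset.card_filter_le Finset.univ (fun h => x h = j)

lemma cnt_sum {n K : ℕ} (x : Fin n → Fin K) : ∑ j : Fin K, cnt x j = n := by
  classical
  simp only [cnt, Finset.card_filter]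
  rw [Finset.sum_comm]
  simp

lemma sum_ite_nat (m k : ℕ) :
    (∑ i : Fin k, if m = (i : ℕ) then (1 : ℕ) else 0) = if m < k then 1 else 0 := by
  rw [Fin.sum_univ_eq_sum_range (fun j => if m = j then 1 else 0) k, Finset.sum_ite_eq]
  simp [Finset.mem_range]

lemma prod_pow_ite (a : ℕ → ℝ) (k dm : ℕ) :
    (∏ i : Fin k, a ((i : ℕ) + 1) ^ (if dm = (i : ℕ) + 1 then 1 else 0)) =
      if 1 ≤ dm ∧ dm ≤ k then a dm else 1 := by
  rw [Fin.prod_univ_eq_prod_range (fun j => a (j + 1) ^ (if dm = j + 1 then 1 else 0)) k]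
  induction k with
  | zero => rw [Finset.range_zero, Finset.prod_empty, if_neg (by omega)]
  | succ k ih =>
    rw [Finset.prod_range_succ, ih]
    by_cases h : dm = k + 1
    · subst h
      rw [if_neg (by omega), if_pos rfl, if_pos (by omega)]
      simp
    · rw [if_neg h, pow_zero, mul_one]
      by_cases h2 : 1 ≤ dm ∧ dm ≤ k
      · rw [if_pos h2, if_pos ⟨h2.1, by omega⟩]
      · rw [if_neg h2, if_neg (by omega)]

lemma Beta_succ_left {x y : ℝ} (hx : 0 < x) (hy : 0 < y) :
    Beta (x + 1) y = x / (x + y) * Beta x y := by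
  unfold Beta
  rw [Real.Gamma_add_one hx.ne', show x + 1 + y = (x + y) + 1 by ring,
    Real.Gamma_add_one (by positivity : (x + y) ≠ 0), div_mul_div_comm]
  ring

lemma Beta_succ_right {x y : ℝ} (hx : 0 < x) (hy : 0 < y) :
    Beta x (y + 1) = y / (x + y) * Beta x y := by
  unfold Beta
  rw [Real.Gamma_add_one hy.ne', show x + (y + 1) = (x + y) + 1 by ring,
    Real.Gamma_add_one (by positivity : (x + y) ≠ 0), div_mul_div_comm]
  ring


set_option maxHeartbeats 1000000 in
/-- Consistency of the `HLS_K` finite-dimensional distributions: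
summing `P_{n+1}` over the last coordinate recovers `P_n`. -/
theorem hlsP_consistent (K : ℕ) (hK : 3 ≤ K) (n : ℕ) (hn : 1 ≤ n) (π ν : ℝ)
    (hπ : 0 < π) (hν : 0 < ν) (a : ℕ → ℝ)
    (hpos : ∀ i, 1 ≤ i → i ≤ K - 2 → 0 < a i)
    (hsum : ∑ i : Fin (K - 2), a ((i : ℕ) + 1) < 1)
    (x : Fin n → Fin K) :
    ∑ d : Fin K, hlsP K hK (n + 1) π ν a (Fin.snoc x d) = hlsP K hK n π ν a x := by
  classical
  obtain ⟨k, rfl⟩ : ∃ k, K = k + 3 := ⟨K - 3, by omega⟩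
  set A : ℝ := ∑ i : Fin (k + 3 - 2), a ((i : ℕ) + 1) with hA
  set Z : ℕ := ∑ i : Fin (k + 3 - 1), cnt x ⟨(i : ℕ), by have := i.isLt; omega⟩ with hZ
  set Pr : ℝ := ∏ i : Fin (k + 3 - 2), a ((i : ℕ) + 1) ^
      cnt x ⟨(i : ℕ) + 1, by have := i.isLt; omega⟩ with hPr
  set z0 : ℕ := cnt x ⟨0, by omega⟩ with hz0
  have hz0n : z0 ≤ n := cnt_le x _
  have hZn : Z ≤ n := by
    have h1 : ∑ j : Fin (k + 2 + 1), cnt x j = n := cnt_sum x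
    rw [Fin.sum_univ_castSucc] at h1
    have h2 : Z = ∑ i : Fin (k + 2), cnt x i.castSucc := by
      rw [hZ]
      exact Finset.sum_congr rfl (fun i _ => rfl)
    omega
  -- value of hlsP at a snoc
  have key : ∀ (dm : ℕ) (hd : dm < k + 3),
      hlsP (k + 3) hK (n + 1) π ν a (Fin.snoc x ⟨dm, hd⟩) =
        (1 - A) ^ (n + 1 - (Z + if dm < k + 3 - 1 then 1 else 0)) *
          (Pr * (if 1 ≤ dm ∧ dm ≤ k + 3 - 2 then a dm else 1)) *
          Beta (((z0 + if dm = 0 then 1 else 0 : ℕ) : ℝ) + π)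
            (((n + 1 - (z0 + if dm = 0 then 1 else 0) : ℕ) : ℝ) + ν) / Beta π ν := by
    intro dm hd
    unfold hlsP
    have hc0 : cnt (Fin.snoc x ⟨dm, hd⟩) ⟨0, by omega⟩ =
        z0 + if dm = 0 then 1 else 0 := by
      rw [cnt_snoc, hz0]
      congr 1
      simp [Fin.ext_iff]
    have hcZ : (∑ i : Fin (k + 3 - 1),
        cnt (Fin.snoc x ⟨dm, hd⟩) ⟨(i : ℕ), by have := i.isLt; omega⟩) =
        Z + if dm < k + 3 - 1 then 1 else 0 := by
      simp only [cnt_snoc]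
      rw [Finset.sum_add_distrib]
      congr 1
      have h3 : ∀ i : Fin (k + 3 - 1),
          (if (⟨dm, hd⟩ : Fin (k + 3)) = ⟨(i : ℕ), by have := i.isLt; omega⟩ then 1 else 0) =
          (if dm = (i : ℕ) then 1 else 0) := by
        intro i
        simp [Fin.ext_iff]
      rw [Finset.sum_congr rfl (fun i _ => h3 i), sum_ite_nat]
    have hcP : (∏ i : Fin (k + 3 - 2), a ((i : ℕ) + 1) ^
        cnt (Fin.snoc x ⟨dm, hd⟩) ⟨(i : ℕ) + 1, by have := i.isLt; omega⟩) =
        Pr * (if 1 ≤ dm ∧ dm ≤ k + 3 - 2 then a dm else 1) := by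
      simp only [cnt_snoc, pow_add]
      rw [Finset.prod_mul_distrib]
      congr 1
      have h3 : ∀ i : Fin (k + 3 - 2),
          a ((i : ℕ) + 1) ^ (if (⟨dm, hd⟩ : Fin (k + 3)) = ⟨(i : ℕ) + 1, by have := i.isLt; omega⟩ then 1 else 0) =
          a ((i : ℕ) + 1) ^ (if dm = (i : ℕ) + 1 then 1 else 0) := by
        intro i
        congr 1
        simp [Fin.ext_iff]
      rw [Finset.prod_congr rfl (fun i _ => h3 i), prod_pow_ite]
    rw [hcZ, hcP, hc0]
  -- evaluate the three kinds of terms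
  have h00 : (0 : Fin (k + 3)) = ⟨0, by omega⟩ := by
    apply Fin.ext; simp
  have h0 : hlsP (k + 3) hK (n + 1) π ν a (Fin.snoc x (0 : Fin (k + 3))) =
      (1 - A) ^ (n - Z) * Pr *
        Beta (((z0 : ℝ) + π) + 1) (((n - z0 : ℕ) : ℝ) + ν) / Beta π ν := by
    rw [h00, key 0 (by omega), if_pos (by omega), if_neg (by omega), if_pos rfl]
    rw [show n + 1 - (Z + 1) = n - Z by omega, show n + 1 - (z0 + 1) = n - z0 by omega]
    push_cast
    ring_nf
  have hmid : ∀ i : Fin (k + 1),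
      hlsP (k + 3) hK (n + 1) π ν a (Fin.snoc x ((Fin.castSucc i).succ)) =
      (1 - A) ^ (n - Z) * (Pr * a ((i : ℕ) + 1)) *
        Beta ((z0 : ℝ) + π) ((((n - z0 : ℕ) : ℝ) + ν) + 1) / Beta π ν := by
    intro i
    have h4 : hlsP (k + 3) hK (n + 1) π ν a (Fin.snoc x ((Fin.castSucc i).succ)) =
        hlsP (k + 3) hK (n + 1) π ν a (Fin.snoc x ⟨(i : ℕ) + 1, by omega⟩) := by
      congr 1
    rw [h4, key ((i : ℕ) + 1) (by omega),
      if_pos (by omega : (i : ℕ) + 1 < k + 3 - 1),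
      if_pos (by omega : 1 ≤ (i : ℕ) + 1 ∧ (i : ℕ) + 1 ≤ k + 3 - 2),
      if_neg (by omega : ¬((i : ℕ) + 1 = 0))]
    rw [show n + 1 - (Z + 1) = n - Z by omega, show z0 + 0 = z0 by omega,
      show n + 1 - z0 = (n - z0) + 1 by omega]
    push_cast
    ring_nf
  have hlast : hlsP (k + 3) hK (n + 1) π ν a (Fin.snoc x ((Fin.last (k + 1)).succ)) =
      (1 - A) ^ ((n - Z) + 1) * Pr *
        Beta ((z0 : ℝ) + π) ((((n - z0 : ℕ) : ℝ) + ν) + 1) / Beta π ν := by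
    have h4 : hlsP (k + 3) hK (n + 1) π ν a (Fin.snoc x ((Fin.last (k + 1)).succ)) =
        hlsP (k + 3) hK (n + 1) π ν a (Fin.snoc x ⟨k + 2, by omega⟩) := by
      congr 1
    rw [h4, key (k + 2) (by omega),
      if_neg (by omega : ¬(k + 2 < k + 3 - 1)),
      if_neg (by omega : ¬(1 ≤ k + 2 ∧ k + 2 ≤ k + 3 - 2)),
      if_neg (by omega : ¬(k + 2 = 0))]
    rw [show n + 1 - (Z + 0) = (n - Z) + 1 by omega, show z0 + 0 = z0 by omega,
      show n + 1 - z0 = (n - z0) + 1 by omega]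
    push_cast
    ring_nf
  -- split the sum
  have hsplit : (∑ d : Fin (k + 3), hlsP (k + 3) hK (n + 1) π ν a (Fin.snoc x d)) =
      hlsP (k + 3) hK (n + 1) π ν a (Fin.snoc x (0 : Fin (k + 3))) +
        ((∑ i : Fin (k + 1),
          hlsP (k + 3) hK (n + 1) π ν a (Fin.snoc x ((Fin.castSucc i).succ))) +
          hlsP (k + 3) hK (n + 1) π ν a (Fin.snoc x ((Fin.last (k + 1)).succ))) := by
    rw [Fin.sum_univ_succ (fun d : Fin (k + 2 + 1) =>
      hlsP (k + 3) hK (n + 1) π ν a (Fin.snoc x d))]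
    congr 1
    exact Fin.sum_univ_castSucc (fun i : Fin (k + 1 + 1) =>
      hlsP (k + 3) hK (n + 1) π ν a (Fin.snoc x i.succ))
  rw [hsplit, h0, hlast, Finset.sum_congr rfl (fun i _ => hmid i)]
  -- now pure algebra
  have hX : (0 : ℝ) < (z0 : ℝ) + π := by positivity
  have hY : (0 : ℝ) < ((n - z0 : ℕ) : ℝ) + ν := by positivity
  have hS : ((z0 : ℝ) + π) + (((n - z0 : ℕ) : ℝ) + ν) ≠ 0 := by positivity
  rw [Beta_succ_left hX hY, Beta_succ_right hX hY]
  -- sum out the middle terms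
  have hmidsum : (∑ i : Fin (k + 1),
      (1 - A) ^ (n - Z) * (Pr * a ((i : ℕ) + 1)) *
        ((((n - z0 : ℕ) : ℝ) + ν) / (((z0 : ℝ) + π) + (((n - z0 : ℕ) : ℝ) + ν)) *
          Beta ((z0 : ℝ) + π) (((n - z0 : ℕ) : ℝ) + ν)) / Beta π ν) =
      A * ((1 - A) ^ (n - Z) * Pr *
        ((((n - z0 : ℕ) : ℝ) + ν) / (((z0 : ℝ) + π) + (((n - z0 : ℕ) : ℝ) + ν)) *
          Beta ((z0 : ℝ) + π) (((n - z0 : ℕ) : ℝ) + ν)) / Beta π ν) := by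
    calc (∑ i : Fin (k + 1),
        (1 - A) ^ (n - Z) * (Pr * a ((i : ℕ) + 1)) *
          ((((n - z0 : ℕ) : ℝ) + ν) / (((z0 : ℝ) + π) + (((n - z0 : ℕ) : ℝ) + ν)) *
            Beta ((z0 : ℝ) + π) (((n - z0 : ℕ) : ℝ) + ν)) / Beta π ν) =
        ∑ i : Fin (k + 1), a ((i : ℕ) + 1) *
          ((1 - A) ^ (n - Z) * Pr *
            ((((n - z0 : ℕ) : ℝ) + ν) / (((z0 : ℝ) + π) + (((n - z0 : ℕ) : ℝ) + ν)) *
              Beta ((z0 : ℝ) + π) (((n - z0 : ℕ) : ℝ) + ν)) / Beta π ν) :=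
        Finset.sum_congr rfl (fun i _ => by ring)
      _ = (∑ i : Fin (k + 1), a ((i : ℕ) + 1)) *
          ((1 - A) ^ (n - Z) * Pr *
            ((((n - z0 : ℕ) : ℝ) + ν) / (((z0 : ℝ) + π) + (((n - z0 : ℕ) : ℝ) + ν)) *
              Beta ((z0 : ℝ) + π) (((n - z0 : ℕ) : ℝ) + ν)) / Beta π ν) := by
        rw [Finset.sum_mul]
      _ = A * ((1 - A) ^ (n - Z) * Pr *
          ((((n - z0 : ℕ) : ℝ) + ν) / (((z0 : ℝ) + π) + (((n - z0 : ℕ) : ℝ) + ν)) *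
            Beta ((z0 : ℝ) + π) (((n - z0 : ℕ) : ℝ) + ν)) / Beta π ν) := by
        congr 1
  rw [hmidsum]
  have hRHS : hlsP (k + 3) hK n π ν a x =
      (1 - A) ^ (n - Z) * Pr *
        Beta ((z0 : ℝ) + π) (((n - z0 : ℕ) : ℝ) + ν) / Beta π ν := by
    unfold hlsP
    rw [← hz0, ← hA, ← hZ, ← hPr]
  rw [hRHS]
  have hkey : ((z0 : ℝ) + π) / (((z0 : ℝ) + π) + (((n - z0 : ℕ) : ℝ) + ν)) +
      A * ((((n - z0 : ℕ) : ℝ) + ν) / (((z0 : ℝ) + π) + (((n - z0 : ℕ) : ℝ) + ν))) +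
      (1 - A) * ((((n - z0 : ℕ) : ℝ) + ν) / (((z0 : ℝ) + π) + (((n - z0 : ℕ) : ℝ) + ν))) = 1 := by
    have h1 : ((z0 : ℝ) + π) / (((z0 : ℝ) + π) + (((n - z0 : ℕ) : ℝ) + ν)) +
        A * ((((n - z0 : ℕ) : ℝ) + ν) / (((z0 : ℝ) + π) + (((n - z0 : ℕ) : ℝ) + ν))) +
        (1 - A) * ((((n - z0 : ℕ) : ℝ) + ν) / (((z0 : ℝ) + π) + (((n - z0 : ℕ) : ℝ) + ν))) =
        (((z0 : ℝ) + π) + (((n - z0 : ℕ) : ℝ) + ν)) /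
          (((z0 : ℝ) + π) + (((n - z0 : ℕ) : ℝ) + ν)) := by ring
    rw [h1, div_self hS]
  linear_combination ((1 - A) ^ (n - Z) * Pr *
      Beta ((z0 : ℝ) + π) (((n - z0 : ℕ) : ℝ) + ν) / Beta π ν) * hkey
end

section
/- Let $f: D^m \to \mathbb{R}$ be separately symmetric in its first $v$ variables and in its last $m-v$ variables, where $D = \{d_1,\ldots,d_K\}$ and $1 \leq v \leq m-1$. Then the canonical symmetrization $\tilde{f}(\mathbf{x}_m) = \frac{1}{m!}\sum_{\pi \in \mathfrak{S}_m} f(x_{\pi(1)},\ldots,x_{\pi(m)})$ is constant on each orbit $C(m, \mathbf{z}_K)$ and, for $\mathbf{x}_m \in C(m,\mathbf{z}_K)$, equals the weighted average $\tilde{f}(\mathbf{x}_m) = \frac{\sum_{(*)} \binom{v}{k_1,\ldots,k_{K-1}}\binom{m-v}{z_1-k_1,\ldots,z_{K-1}-k_{K-1}} f_{v,m-v}((k_1,\ldots,k_{K-1}),(z_1-k_1,\ldots,z_K-k_K))}{\sum_{(*)} \binom{v}{k_1,\ldots,k_{K-1}}\binom{m-v}{z_1-k_1,\ldots,z_{K-1}-k_{K-1}}}$,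 where the sum is over all $(m,v,\mathbf{z}_K)$-coherent vectors $(k_1,\ldots,k_{K-1})$. -/
/-- The set of `(m,v,z)`-coherent occupation vectors: vectors `k : Fin K → ℕ` with
`∑ kᵢ = v` and `kᵢ ≤ zᵢ` for all `i`. -/
def coherent (K v : ℕ) (z : Fin K → ℕ) : Finset (Fin K → ℕ) :=
  (Finset.Nat.antidiagonalTuple K v).filter fun k => ∀ i, k i ≤ z i

/-- The weight `(v choose k₁,…,k_{K-1}) ⋅ (m-v choose z₁-k₁,…,z_{K-1}-k_{K-1})`
attached to a coherent vector `k`. -/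
def weight {K : ℕ} (z k : Fin K → ℕ) : ℕ :=
  Nat.multinomial Finset.univ k * Nat.multinomial Finset.univ (fun i => z i - k i)

open Finset Equiv Nat

section Rearrangements

variable {ι α : Type*} [Fintype ι] [DecidableEq ι] [Fintype α] [DecidableEq α]

def rearrangements (x : ι → α) : Finset (ι → α) :=
  {w | ∀ a, #{i | w i = a} = #{i | x i = a}}

lemma mem_rearrangements {x w : ι → α} :
    w ∈ rearrangements x ↔ ∀ a, #{i | w i = a} = #{i | x i = a} := by
  simp [rearrangements]

lemma comp_perm_mem_rearrangements (x : ι → α) (σ : Perm ι) : x ∘ σ ∈ rearrangements x :=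
  mem_rearrangements.2 fun a => card_equiv σ (by simp)

lemma exists_perm_comp_eq_of_mem_rearrangements {x w : ι → α} (hw : w ∈ rearrangements x) :
    ∃ σ : Perm ι, x ∘ σ = w := by
  have e : ∀ a, {i // w i = a} ≃ {i // x i = a} := fun a =>
    Fintype.equivOfCardEq (by simpa [Fintype.card_subtype] using mem_rearrangements.1 hw a)
  exact ⟨ofFiberEquiv e, funext (ofFiberEquiv_map e)⟩

lemma card_perm_comp_eq {x w : ι → α} (hw : w ∈ rearrangements x) :
    #{σ : Perm ι | x ∘ σ = w} = ∏ a, (#{i | x i = a})! := by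
  obtain ⟨τ, rfl⟩ := exists_perm_comp_eq_of_mem_rearrangements hw
  have hstab : #{σ : Perm ι | x ∘ σ = x} = #{σ : Perm ι | x ∘ σ = x ∘ τ} :=
    card_equiv (Equiv.mulRight τ) fun σ => by
      simp only [mem_filter, mem_univ, true_and, coe_mulRight, Perm.coe_mul,
        ← Function.comp_assoc]
      exact τ.surjective.injective_comp_right.eq_iff.symm
  rw [← hstab, ← Fintype.card_subtype, DomMulAct.stabilizer_card]
  simp [Fintype.card_subtype]

lemma sum_perm_comp {M : Type*} [AddCommMonoid M] (x : ι → α) (g : (ι → α) → M) :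
    ∑ σ : Perm ι, g (x ∘ σ) =
      (∏ a, (#{i | x i = a})!) • ∑ w ∈ rearrangements x, g w := by
  rw [← sum_fiberwise_of_maps_to fun σ _ => comp_perm_mem_rearrangements x σ, smul_sum]
  refine sum_congr rfl fun w hw => ?_
  rw [sum_congr rfl fun σ hσ => congrArg g (mem_filter.1 hσ).2, sum_const, card_perm_comp_eq hw]

lemma card_rearrangements (x : ι → α) :
    #(rearrangements x) = Nat.multinomial univ fun a => #{i | x i = a} := by
  have hcount := sum_perm_comp x fun _ => 1
  have htotal : ∑ a, #{i | x i = a} = Fintype.card ι :=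
    (card_eq_sum_card_fiberwise fun i _ => mem_univ (x i)).symm
  simp only [sum_const, Finset.card_univ, Fintype.card_perm, smul_eq_mul, mul_one] at hcount
  rw [← htotal, ← Nat.multinomial_spec] at hcount
  exact (Nat.eq_of_mul_eq_mul_left (prod_pos fun a _ => (#{i | x i = a}).factorial_pos) hcount).symm

end Rearrangements

section FiberCounts

variable {ι α : Type*} [Fintype ι] [DecidableEq α] (p : ι → Prop) [DecidablePred p]

lemma card_filter_subtype_eq (w : ι → α) (a : α) :
    #{s : Subtype p | w s = a} = #{i | p i ∧ w i = a} := by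
  simp only [← Fintype.card_subtype]
  exact Fintype.card_congr (subtypeSubtypeEquivSubtypeInter p fun i => w i = a)

lemma card_filter_and_add_card_filter_not_and (w : ι → α) (a : α) :
    #{i | p i ∧ w i = a} + #{i | ¬p i ∧ w i = a} = #{i | w i = a} := by
  rw [← card_filter_add_card_filter_not (s := {i | w i = a}) p, filter_filter, filter_filter]
  simp only [and_comm]

end FiberCounts

section Blocks

variable {ι α : Type*} [Fintype ι] [DecidableEq ι] [Fintype α] [DecidableEq α]
  (p : ι → Prop) [DecidablePred p]

def blockRearrangements (u : ι → α) : Finset (ι → α) :=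
  {w | ∀ a, #{i | p i ∧ w i = a} = #{i | p i ∧ u i = a} ∧
    #{i | ¬p i ∧ w i = a} = #{i | ¬p i ∧ u i = a}}

lemma mem_blockRearrangements_iff {u w : ι → α} :
    w ∈ blockRearrangements p u ↔
      (fun s : Subtype p => w s) ∈ rearrangements (fun s : Subtype p => u s) ∧
      (fun s : {i // ¬p i} => w s) ∈ rearrangements (fun s : {i // ¬p i} => u s) := by
  simp only [blockRearrangements, mem_rearrangements, mem_filter, mem_univ, true_and,
    card_filter_subtype_eq, forall_and]

lemma card_blockRearrangements (u : ι → α) :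
    #(blockRearrangements p u) =
      Nat.multinomial univ (fun a => #{i | p i ∧ u i = a}) *
        Nat.multinomial univ (fun a => #{i | ¬p i ∧ u i = a}) := by
  rw [card_equiv (piEquivPiSubtypeProd p fun _ => α) (t := _ ×ˢ _)
      fun w => by rw [mem_blockRearrangements_iff, mem_product]; rfl,
    card_product, card_rearrangements, card_rearrangements]
  simp only [card_filter_subtype_eq]

lemma exists_perm_comp_eq_of_mem_blockRearrangements {u w : ι → α}
    (hw : w ∈ blockRearrangements p u) :
    ∃ σ : Perm ι, (∀ i, p i ↔ p (σ i)) ∧ u ∘ σ = w := by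
  obtain ⟨hin, hout⟩ := (mem_blockRearrangements_iff p).1 hw
  obtain ⟨σin, hσin⟩ := exists_perm_comp_eq_of_mem_rearrangements hin
  obtain ⟨σout, hσout⟩ := exists_perm_comp_eq_of_mem_rearrangements hout
  refine ⟨σin.subtypeCongr σout, fun i => ?_, funext fun i => ?_⟩
  · by_cases hi : p i
    · simp [Perm.subtypeCongr.left_apply _ _ hi, hi, (σin _).2]
    · simp [Perm.subtypeCongr.right_apply _ _ hi, hi, (σout _).2]
  · by_cases hi : p i
    · simpa [Perm.subtypeCongr.left_apply _ _ hi] using congrFun hσin ⟨i, hi⟩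
    · simpa [Perm.subtypeCongr.right_apply _ _ hi] using congrFun hσout ⟨i, hi⟩

end Blocks

section HeadBlock

variable {K m v : ℕ}

def headCounts (v : ℕ) (w : Fin m → Fin K) (j : Fin K) : ℕ :=
  #{t : Fin m | (t : ℕ) < v ∧ w t = j}

lemma headCounts_mem_coherent (hv : v ≤ m) {z : Fin K → ℕ} {w : Fin m → Fin K}
    (hw : ∀ j, cnt w j = z j) : headCounts v w ∈ coherent K v z := by
  refine mem_filter.2 ⟨Nat.mem_antidiagonalTuple.2 ?_, fun j => ?_⟩
  · have hhead : #{t : Fin m | (t : ℕ) < v} = v := by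
      rw [Fin.card_filter_val_lt, min_eq_right hv]
    rw [card_eq_sum_card_fiberwise fun t _ => mem_univ (w t)] at hhead
    simpa only [headCounts, filter_filter] using hhead
  · exact (card_le_card fun t => by simp +contextual).trans (hw j).le

lemma filter_headCounts_eq_blockRearrangements {z k : Fin K → ℕ} {x u : Fin m → Fin K}
    (hx : ∀ j, cnt x j = z j) (hk : k ∈ coherent K v z)
    (hu_head : ∀ j, #{t : Fin m | (t : ℕ) < v ∧ u t = j} = k j)
    (hu_tail : ∀ j, #{t : Fin m | v ≤ (t : ℕ) ∧ u t = j} = z j - k j) :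
    {w ∈ rearrangements x | headCounts v w = k} =
      blockRearrangements (fun t : Fin m => (t : ℕ) < v) u := by
  have hkz : ∀ j, k j ≤ z j := (mem_filter.1 hk).2
  have hu_tail' : ∀ j, #{t : Fin m | ¬(t : ℕ) < v ∧ u t = j} = z j - k j := by
    simpa only [not_lt] using hu_tail
  ext w
  have hsplit := card_filter_and_add_card_filter_not_and (fun t : Fin m => (t : ℕ) < v) w
  have hx' : ∀ j, #{t | x t = j} = z j := hx
  simp only [mem_filter, mem_univ, true_and, mem_rearrangements, blockRearrangements,
    funext_iff, headCounts, hu_head, hu_tail', hx']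
  constructor
  · rintro ⟨hcnt, hhead⟩ j
    have := hsplit j; have := hcnt j; have := hhead j
    omega
  · intro h
    refine ⟨fun j => ?_, fun j => (h j).1⟩
    have := hsplit j; have := h j; have := hkz j
    omega

variable {z : Fin K → ℕ} {x : Fin m → Fin K} {y : (Fin K → ℕ) → Fin m → Fin K}
  {M : Type*} [AddCommMonoid M] {g : (Fin m → Fin K) → M}

lemma sum_rearrangements_eq_sum_coherent (hv : v ≤ m) (hx : ∀ j, cnt x j = z j)
    (hy : ∀ k ∈ coherent K v z,
      (∀ j, #{t : Fin m | (t : ℕ) < v ∧ y k t = j} = k j) ∧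
      (∀ j, #{t : Fin m | v ≤ (t : ℕ) ∧ y k t = j} = z j - k j))
    (hg : ∀ σ : Perm (Fin m), (∀ i : Fin m, ((i : ℕ) < v ↔ ((σ i : ℕ) < v))) →
      ∀ w, g (w ∘ σ) = g w) :
    ∑ w ∈ rearrangements x, g w = ∑ k ∈ coherent K v z, weight z k • g (y k) := by
  rw [← sum_fiberwise_of_maps_to fun w hw =>
    headCounts_mem_coherent hv fun j => (mem_rearrangements.1 hw j).trans (hx j)]
  refine sum_congr rfl fun k hk => ?_
  obtain ⟨hy_head, hy_tail⟩ := hy k hk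
  have hconst : ∀ w ∈ blockRearrangements (fun t : Fin m => (t : ℕ) < v) (y k),
      g w = g (y k) := fun w hw => by
    obtain ⟨σ, hσ, rfl⟩ := exists_perm_comp_eq_of_mem_blockRearrangements _ hw
    exact hg σ hσ (y k)
  have hweight : #(blockRearrangements (fun t : Fin m => (t : ℕ) < v) (y k)) = weight z k := by
    rw [card_blockRearrangements, weight]
    simp only [not_lt, hy_head, hy_tail]
  rw [filter_headCounts_eq_blockRearrangements hx hk hy_head hy_tail, sum_congr rfl hconst,
    sum_const, hweight]

lemma sum_perm_comp_eq_sum_coherent (hv : v ≤ m) (hx : ∀ j, cnt x j = z j)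
    (hy : ∀ k ∈ coherent K v z,
      (∀ j, #{t : Fin m | (t : ℕ) < v ∧ y k t = j} = k j) ∧
      (∀ j, #{t : Fin m | v ≤ (t : ℕ) ∧ y k t = j} = z j - k j))
    (hg : ∀ σ : Perm (Fin m), (∀ i : Fin m, ((i : ℕ) < v ↔ ((σ i : ℕ) < v))) →
      ∀ w, g (w ∘ σ) = g w) :
    ∑ σ : Perm (Fin m), g (x ∘ σ) =
      (∏ j, (z j)!) • ∑ k ∈ coherent K v z, weight z k • g (y k) := by
  rw [sum_perm_comp, sum_rearrangements_eq_sum_coherent hv hx hy hg]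
  exact congrArg (· • _) (prod_congr rfl fun j _ => congrArg factorial (hx j))

end HeadBlock

theorem symmetrization_lemma_general (K m v : ℕ) (hvm : v ≤ m - 1)
    (f : (Fin m → Fin K) → ℝ)
    (hsym : ∀ σ : Equiv.Perm (Fin m),
      (∀ i : Fin m, ((i : ℕ) < v ↔ ((σ i : ℕ) < v))) → ∀ x, f (x ∘ σ) = f x)
    (z : Fin K → ℕ)
    (x : Fin m → Fin K) (hx : ∀ j, cnt x j = z j)
    (y : (Fin K → ℕ) → Fin m → Fin K)
    (hy : ∀ k ∈ coherent K v z,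
      (∀ j, (Finset.univ.filter fun t : Fin m => (t : ℕ) < v ∧ y k t = j).card = k j) ∧
      (∀ j, (Finset.univ.filter fun t : Fin m => v ≤ (t : ℕ) ∧ y k t = j).card = z j - k j)) :
    ((1 : ℝ) / m.factorial) * ∑ σ : Equiv.Perm (Fin m), f (x ∘ σ)
      = (∑ k ∈ coherent K v z, (weight z k : ℝ) * f (y k)) /
        (∑ k ∈ coherent K v z, (weight z k : ℝ)) := by
  have hv : v ≤ m := hvm.trans (Nat.sub_le m 1)
  have hsum := sum_perm_comp_eq_sum_coherent hv hx hy hsym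
  have hcard := sum_perm_comp_eq_sum_coherent hv hx hy (g := fun _ => (1 : ℝ)) fun _ _ _ => rfl
  simp only [sum_const, Finset.card_univ, Fintype.card_perm, Fintype.card_fin, nsmul_eq_mul,
    mul_one] at hsum hcard
  have hfact : (m ! : ℝ) ≠ 0 := by positivity
  rw [hcard] at hfact
  rw [hsum, hcard]
  field_simp [left_ne_zero_of_mul hfact, right_ne_zero_of_mul hfact]

/-- Symmetrization lemma (Lemma 2 of the paper): if `f : D^m → ℝ` is separately symmetric
in its first `v` and last `m-v` variables, then for `x` in the orbit `C(m,z)` the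
canonical symmetrization `f̃(x) = (1/m!) ∑_σ f(x∘σ)` equals the weighted average of the
common values `f_{v,m-v}(k, z-k)` over `(m,v,z)`-coherent vectors `k`; here
`y k` is any vector whose first `v` coordinates contain `kᵢ` entries equal to `dᵢ`
and whose last `m-v` coordinates contain `zᵢ-kᵢ` entries equal to `dᵢ`. -/
theorem symmetrization_lemma (K m v : ℕ) (hK : 1 ≤ K) (hm : 2 ≤ m)
    (hv1 : 1 ≤ v) (hvm : v ≤ m - 1)
    (f : (Fin m → Fin K) → ℝ)
    (hsym : ∀ σ : Equiv.Perm (Fin m),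
      (∀ i : Fin m, ((i : ℕ) < v ↔ ((σ i : ℕ) < v))) → ∀ x, f (x ∘ σ) = f x)
    (z : Fin K → ℕ) (hz : ∑ i, z i = m)
    (x : Fin m → Fin K) (hx : ∀ j, cnt x j = z j)
    (y : (Fin K → ℕ) → Fin m → Fin K)
    (hy : ∀ k ∈ coherent K v z,
      (∀ j, (Finset.univ.filter fun t : Fin m => (t : ℕ) < v ∧ y k t = j).card = k j) ∧
      (∀ j, (Finset.univ.filter fun t : Fin m => v ≤ (t : ℕ) ∧ y k t = j).card = z j - k j)) :
    ((1 : ℝ) / m.factorial) * ∑ σ : Equiv.Perm (Fin m), f (x ∘ σ)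
      = (∑ k ∈ coherent K v z, (weight z k : ℝ) * f (y k)) /
        (∑ k ∈ coherent K v z, (weight z k : ℝ)) :=
  symmetrization_lemma_general K m v hvm f hsym z x hx y hy
end

section
/- Under the assumptions of the symmetrization lemma, $\tilde{f}_{v,m-v}(\mathbf{x}_m) = 0$ for every $\mathbf{x}_m \in D^m$ if and only if, for every weak $K$-composition $\mathbf{z}_K \in \mathcal{N}(m,K)$, $\sum_{(*)} \binom{v}{k_1,\ldots,k_{K-1}} \binom{m-v}{z_1-k_1,\ldots,z_{K-1}-k_{K-1}} f_{v,m-v}((k_1,\ldots,k_{K-1}),(z_1-k_1,\ldots,z_K-k_K)) = 0$, the sum running over all $(m,v,\mathbf{z}_K)$-coherent vectors. -/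
open Finset Equiv Nat

section FiberCard

variable {α ι : Type*} [Fintype α] [DecidableEq ι]

/-- For `x ∈ D^m` with `D = {d₁, …, d_K}`, this is the weak composition `z` of occupation
numbers of `x`. -/
def fiberCard (x : α → ι) (i : ι) : ℕ := #{a | x a = i}

lemma fiberCard_comp_perm (x : α → ι) (σ : Perm α) : fiberCard (x ∘ σ) = fiberCard x := by
  funext i
  simp only [fiberCard, ← Fintype.card_subtype]
  exact Fintype.card_congr (σ.subtypeEquiv fun _ => Iff.rfl)

lemma sum_fiberCard [Fintype ι] (x : α → ι) : ∑ i, fiberCard x i = Fintype.card α := by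
  simp only [fiberCard, ← card_eq_sum_card_fiberwise (fun a _ => mem_univ (x a))]
  exact Finset.card_univ

lemma exists_fiberCard_eq [Fintype ι] (c : ι → ℕ) (hc : ∑ i, c i = Fintype.card α) :
    ∃ x : α → ι, fiberCard x = c := by
  let e : α ≃ Σ i, Fin (c i) := Fintype.equivOfCardEq (by simp [hc])
  refine ⟨fun a => (e a).1, funext fun i => ?_⟩
  simp only [fiberCard, ← Fintype.card_subtype]
  rw [Fintype.card_congr ((e.subtypeEquiv (q := fun s => s.1 = i) fun _ => Iff.rfl).trans
    (sigmaSubtype i)), Fintype.card_fin]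

lemma exists_perm_comp_eq_of_fiberCard_eq {x w : α → ι} (h : fiberCard x = fiberCard w) :
    ∃ σ : Perm α, x ∘ σ = w := by
  have e (i : ι) : {a // w a = i} ≃ {a // x a = i} :=
    Fintype.equivOfCardEq <| by
      rw [Fintype.card_subtype, Fintype.card_subtype]
      exact (congrFun h i).symm
  exact ⟨ofFiberEquiv e, funext (ofFiberEquiv_map e)⟩

lemma card_perm_comp_eq_of_fiberCard_eq [DecidableEq α] [Fintype ι] {x w : α → ι}
    (h : fiberCard x = fiberCard w) :
    #{σ : Perm α | x ∘ σ = w} = ∏ i, (fiberCard x i)! := by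
  obtain ⟨σ₀, rfl⟩ := exists_perm_comp_eq_of_fiberCard_eq h
  have hstab := DomMulAct.stabilizer_card x
  simp only [Fintype.card_subtype] at hstab
  unfold fiberCard
  rw [← hstab]
  refine card_nbij' (· * σ₀⁻¹) (· * σ₀) (fun σ hσ => ?_) (fun σ hσ => ?_)
    (fun σ _ => inv_mul_cancel_right σ σ₀) (fun σ _ => mul_inv_cancel_right σ σ₀)
  · simp only [mem_coe, mem_filter, mem_univ, true_and] at hσ ⊢
    funext a
    simpa using congrFun hσ (σ₀⁻¹ a)
  · simp only [mem_coe, mem_filter, mem_univ, true_and] at hσ ⊢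
    funext a
    simpa using congrFun hσ (σ₀ a)

lemma sum_comp_perm_eq_nsmul [DecidableEq α] [Fintype ι] {M : Type*} [AddCommMonoid M]
    (g : (α → ι) → M) (x : α → ι) :
    ∑ σ : Perm α, g (x ∘ σ)
      = (∏ i, (fiberCard x i)!) • ∑ w with fiberCard w = fiberCard x, g w := by
  rw [← sum_fiberwise_of_maps_to (g := fun σ : Perm α => x ∘ σ)
    (t := {w | fiberCard w = fiberCard x}) (fun σ _ => by simp [fiberCard_comp_perm]), smul_sum]
  refine sum_congr rfl fun w hw => ?_
  rw [mem_filter] at hw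
  rw [sum_congr rfl fun σ hσ => congrArg g (mem_filter.1 hσ).2, sum_const,
    card_perm_comp_eq_of_fiberCard_eq hw.2.symm]

lemma card_fiberCard_eq_multinomial [DecidableEq α] [Fintype ι] (x : α → ι) :
    #{w : α → ι | fiberCard w = fiberCard x} = multinomial univ (fiberCard x) := by
  have hcount := sum_comp_perm_eq_nsmul (fun _ => (1 : ℕ)) x
  have hspec := multinomial_spec univ (fiberCard x)
  simp only [sum_const, smul_eq_mul, mul_one] at hcount
  rw [Finset.card_univ, Fintype.card_perm] at hcount
  rw [sum_fiberCard, hcount] at hspec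
  exact Nat.eq_of_mul_eq_mul_left (prod_pos fun i _ => factorial_pos _) hspec.symm

variable (p : α → Prop) [DecidablePred p]

lemma fiberCard_restrict (w : α → ι) (i : ι) :
    fiberCard (Subtype.restrict p w) i = #{a | p a ∧ w a = i} := by
  simp only [fiberCard, ← Fintype.card_subtype]
  exact Fintype.card_congr (subtypeSubtypeEquivSubtypeInter p (w · = i))

lemma fiberCard_restrict_add_fiberCard_restrict_not (w : α → ι) (i : ι) :
    fiberCard (Subtype.restrict p w) i + fiberCard (Subtype.restrict (¬p ·) w) i
      = fiberCard w i := by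
  rw [fiberCard_restrict, fiberCard_restrict, fiberCard,
    ← card_filter_add_card_filter_not (s := {a | w a = i}) p, filter_filter, filter_filter]
  simp only [and_comm]

lemma card_fiberCard_restrict_eq [DecidableEq α] [Fintype ι] (w₀ : α → ι) :
    #{w : α → ι | fiberCard (Subtype.restrict p w) = fiberCard (Subtype.restrict p w₀) ∧
        fiberCard (Subtype.restrict (¬p ·) w) = fiberCard (Subtype.restrict (¬p ·) w₀)}
      = multinomial univ (fiberCard (Subtype.restrict p w₀))
        * multinomial univ (fiberCard (Subtype.restrict (¬p ·) w₀)) := by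
  rw [← card_fiberCard_eq_multinomial, ← card_fiberCard_eq_multinomial, ← card_product]
  exact card_equiv (piEquivPiSubtypeProd p fun _ => ι) fun w => by simp; rfl

lemma eq_of_fiberCard_restrict_eq {β : Type*} (f : (α → ι) → β)
    (hf : ∀ σ : Perm α, (∀ a, p a ↔ p (σ a)) → ∀ x, f (x ∘ σ) = f x) {u u' : α → ι}
    (hp : fiberCard (Subtype.restrict p u) = fiberCard (Subtype.restrict p u'))
    (hnp : fiberCard (Subtype.restrict (¬p ·) u) = fiberCard (Subtype.restrict (¬p ·) u')) :
    f u = f u' := by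
  obtain ⟨σ₁, h₁⟩ := exists_perm_comp_eq_of_fiberCard_eq hp
  obtain ⟨σ₂, h₂⟩ := exists_perm_comp_eq_of_fiberCard_eq hnp
  have hσ (a : α) : p a ↔ p (σ₁.subtypeCongr σ₂ a) := by
    by_cases ha : p a
    · simpa [ha] using (σ₁ ⟨a, ha⟩).2
    · simpa [ha] using (σ₂ ⟨a, ha⟩).2
  have hu : u ∘ σ₁.subtypeCongr σ₂ = u' := by
    funext a
    by_cases ha : p a
    · simpa [ha] using congrFun h₁ ⟨a, ha⟩
    · simpa [ha] using congrFun h₂ ⟨a, ha⟩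
  rw [← hu, hf _ hσ]

end FiberCard

lemma mem_coherent {K v : ℕ} {z k : Fin K → ℕ} :
    k ∈ coherent K v z ↔ ∑ i, k i = v ∧ ∀ i, k i ≤ z i := by
  rw [coherent, mem_filter, Nat.mem_antidiagonalTuple]

lemma sum_comp_perm_eq_sum_coherent {α : Type*} [Fintype α] [DecidableEq α] (p : α → Prop)
    [DecidablePred p] {K v : ℕ} (hv : Fintype.card {a // p a} = v) {M : Type*}
    [AddCommMonoid M] (f : (α → Fin K) → M)
    (hf : ∀ σ : Perm α, (∀ a, p a ↔ p (σ a)) → ∀ x, f (x ∘ σ) = f x)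
    (x : α → Fin K) (y : (Fin K → ℕ) → α → Fin K)
    (hy : ∀ k ∈ coherent K v (fiberCard x), fiberCard (Subtype.restrict p (y k)) = k ∧
      fiberCard (Subtype.restrict (¬p ·) (y k)) = fiberCard x - k) :
    ∑ σ : Perm α, f (x ∘ σ) = (∏ i, (fiberCard x i)!) •
      ∑ k ∈ coherent K v (fiberCard x), weight (fiberCard x) k • f (y k) := by
  set z := fiberCard x
  have hsplit := fiberCard_restrict_add_fiberCard_restrict_not (ι := Fin K) p
  have hmaps : ∀ w ∈ ({w | fiberCard w = z} : Finset (α → Fin K)),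
      fiberCard (Subtype.restrict p w) ∈ coherent K v z := by
    intro w hw
    rw [mem_filter] at hw
    refine mem_coherent.2 ⟨by rw [sum_fiberCard, hv], fun i => ?_⟩
    rw [← hw.2, ← hsplit w i]
    exact Nat.le_add_right _ _
  rw [sum_comp_perm_eq_nsmul, ← sum_fiberwise_of_maps_to hmaps]
  congr 1
  refine sum_congr rfl fun k hk => ?_
  obtain ⟨hlo, hhi⟩ := hy k hk
  have hkz := (mem_coherent.1 hk).2
  have hfiber : ({w | fiberCard w = z} : Finset (α → Fin K)).filter
        (fun w => fiberCard (Subtype.restrict p w) = k)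
      = ({w | fiberCard (Subtype.restrict p w) = fiberCard (Subtype.restrict p (y k)) ∧
          fiberCard (Subtype.restrict (¬p ·) w) = fiberCard (Subtype.restrict (¬p ·) (y k))} :
          Finset (α → Fin K)) := by
    ext w
    simp only [filter_filter, mem_filter, mem_univ, true_and, hlo, hhi, funext_iff, Pi.sub_apply]
    constructor
    · rintro ⟨hz, hk⟩
      exact ⟨hk, fun i => by have := hsplit w i; have := hz i; have := hk i; omega⟩
    · rintro ⟨hk, hzk⟩
      exact ⟨fun i => by have := hsplit w i; have := hkz i; have := hk i; have := hzk i; omega, hk⟩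
  rw [hfiber, sum_congr rfl fun w hw => eq_of_fiberCard_restrict_eq p f hf (mem_filter.1 hw).2.1
    (mem_filter.1 hw).2.2, sum_const, card_fiberCard_restrict_eq, hlo, hhi]
  rfl

theorem symmetrization_vanishes_iff_general (K m v : ℕ) (hvm : v ≤ m - 1)
    (f : (Fin m → Fin K) → ℝ)
    (hsym : ∀ σ : Equiv.Perm (Fin m),
      (∀ i : Fin m, ((i : ℕ) < v ↔ ((σ i : ℕ) < v))) → ∀ x, f (x ∘ σ) = f x)
    (y : (Fin K → ℕ) → (Fin K → ℕ) → Fin m → Fin K)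
    (hy : ∀ z : Fin K → ℕ, ∑ i, z i = m → ∀ k ∈ coherent K v z,
      (∀ j, (Finset.univ.filter fun t : Fin m => (t : ℕ) < v ∧ y z k t = j).card = k j) ∧
      (∀ j, (Finset.univ.filter fun t : Fin m => v ≤ (t : ℕ) ∧ y z k t = j).card = z j - k j)) :
    (∀ x : Fin m → Fin K, ((1 : ℝ) / m.factorial) * ∑ σ : Equiv.Perm (Fin m), f (x ∘ σ) = 0)
      ↔ ∀ z : Fin K → ℕ, ∑ i, z i = m →
        ∑ k ∈ coherent K v z, (weight z k : ℝ) * f (y z k) = 0 := by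
  have hv : Fintype.card {t : Fin m // (t : ℕ) < v} = v := by
    rw [Fintype.card_subtype, Fin.card_filter_val_lt]
    omega
  have hsum (x : Fin m → Fin K) : ∑ σ : Perm (Fin m), f (x ∘ σ)
      = (∏ i, (fiberCard x i)! : ℕ) * ∑ k ∈ coherent K v (fiberCard x),
          (weight (fiberCard x) k : ℝ) * f (y (fiberCard x) k) := by
    have hx : ∑ i, fiberCard x i = m := (sum_fiberCard x).trans (Fintype.card_fin m)
    rw [sum_comp_perm_eq_sum_coherent _ hv f hsym x (y (fiberCard x)) fun k hk => ?_]
    · simp only [nsmul_eq_mul]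
    · simp only [funext_iff, fiberCard_restrict, not_lt]
      exact hy _ hx k hk
  constructor
  · intro h z hz
    obtain ⟨x, rfl⟩ := exists_fiberCard_eq z (by rw [hz, Fintype.card_fin])
    simpa [hsum, factorial_ne_zero, prod_eq_zero_iff] using h x
  · intro h x
    rw [hsum, h _ ((sum_fiberCard x).trans (Fintype.card_fin m)), mul_zero, mul_zero]

/-- Equation (sedici_K): under the assumptions of the symmetrization lemma, the canonical
symmetrization `f̃` vanishes identically on `D^m` if and only if, for every weak
`K`-composition `z` of `m`, the weighted sum over `(m,v,z)`-coherent vectors `k` of the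
common values `f_{v,m-v}(k, z-k)` vanishes; here `y z k` is any vector whose first `v`
coordinates contain `kᵢ` entries equal to `dᵢ` and whose last `m-v` coordinates contain
`zᵢ-kᵢ` entries equal to `dᵢ`. -/
theorem symmetrization_vanishes_iff (K m v : ℕ) (hK : 1 ≤ K) (hm : 2 ≤ m)
    (hv1 : 1 ≤ v) (hvm : v ≤ m - 1)
    (f : (Fin m → Fin K) → ℝ)
    (hsym : ∀ σ : Equiv.Perm (Fin m),
      (∀ i : Fin m, ((i : ℕ) < v ↔ ((σ i : ℕ) < v))) → ∀ x, f (x ∘ σ) = f x)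
    (y : (Fin K → ℕ) → (Fin K → ℕ) → Fin m → Fin K)
    (hy : ∀ z : Fin K → ℕ, ∑ i, z i = m → ∀ k ∈ coherent K v z,
      (∀ j, (Finset.univ.filter fun t : Fin m => (t : ℕ) < v ∧ y z k t = j).card = k j) ∧
      (∀ j, (Finset.univ.filter fun t : Fin m => v ≤ (t : ℕ) ∧ y z k t = j).card = z j - k j)) :
    (∀ x : Fin m → Fin K, ((1 : ℝ) / m.factorial) * ∑ σ : Equiv.Perm (Fin m), f (x ∘ σ) = 0)
      ↔ ∀ z : Fin K → ℕ, ∑ i, z i = m →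
        ∑ k ∈ coherent K v z, (weight z k : ℝ) * f (y z k) = 0 :=
  symmetrization_vanishes_iff_general K m v hvm f hsym y hy
end
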